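/- arXiv:2603.24130 — 5 statements merged into one kernel-verified Lean document; each statement's English description precedes it below -/
import Mathlib

section
/- Let n, p ∈ ℕ. Let T : ℝ → Matrix (Fin n) (Fin n) ℝ be infinitely differentiable (C^∞) with T(t) invertible for every t, and let F : ℝ → Matrix (Fin n) (Fin n) ℝ and H : ℝ → Matrix (Fin p) (Fin n) ℝ be infinitely differentiable. Define the transformed Jacobians F*(t) = T'(t)·T(t)⁻¹ + T(t)·F(t)·T(t)⁻¹ and H*(t) = H(t)·T(t)⁻¹. Define the local observability block sequences O, O* : ℕ → ℝ → Matrix (Fin p) (Fin n) ℝ recursively by O₀(t) = H(t), O_{k+1}(t) = O_k(t)·F(t) + (d/dt)O_k(t), and O*₀(t) = H*(t), O*_{k+1}(t) = O*_k(t)·F*(t) + (d/dt)O*_k(t). Then for every k ∈ ℕ and every t ∈ ℝ: O*_k(t) = O_k(t)·T(t)⁻¹. -/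
open Matrix

/-- Entrywise derivative of a matrix-valued function of time. -/
noncomputable def matDeriv {p n : ℕ} (A : ℝ → Matrix (Fin p) (Fin n) ℝ) (t : ℝ) :
    Matrix (Fin p) (Fin n) ℝ :=
  Matrix.of fun i j => deriv (fun s => A s i j) t

/-- The local observability block sequence of the time-varying linear system
`ε̇ = F(t) ε`, `z = H(t) ε`:  `O₀ = H`, `O_{k+1} = O_k F + Ȯ_k`. -/
noncomputable def obsSeq {n p : ℕ} (F : ℝ → Matrix (Fin n) (Fin n) ℝ)
    (H : ℝ → Matrix (Fin p) (Fin n) ℝ) : ℕ → ℝ → Matrix (Fin p) (Fin n) ℝ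
  | 0 => H
  | k + 1 => fun t => obsSeq F H k t * F t + matDeriv (obsSeq F H k) t

section Aux

variable {n p q : ℕ}

/-- entrywise smooth notion -/
abbrev MatSmooth {p n : ℕ} (A : ℝ → Matrix (Fin p) (Fin n) ℝ) : Prop :=
  ∀ i j, ContDiff ℝ (⊤ : ℕ∞) fun t => A t i j

lemma MatSmooth.mul {A : ℝ → Matrix (Fin p) (Fin n) ℝ} {B : ℝ → Matrix (Fin n) (Fin q) ℝ}
    (hA : MatSmooth A) (hB : MatSmooth B) : MatSmooth (fun t => A t * B t) := by
  intro i j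
  simp only [Matrix.mul_apply]
  exact ContDiff.sum fun k _ => (hA i k).mul (hB k j)

lemma MatSmooth.add {A B : ℝ → Matrix (Fin p) (Fin n) ℝ}
    (hA : MatSmooth A) (hB : MatSmooth B) : MatSmooth (fun t => A t + B t) := by
  intro i j
  exact (hA i j).add (hB i j)

lemma MatSmooth.matDeriv {A : ℝ → Matrix (Fin p) (Fin n) ℝ} (hA : MatSmooth A) :
    MatSmooth (fun t => matDeriv A t) := by
  intro i j
  exact (contDiff_infty_iff_deriv.mp (hA i j)).2

lemma MatSmooth.det {M : ℝ → Matrix (Fin n) (Fin n) ℝ} (hM : MatSmooth M) :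
    ContDiff ℝ (⊤ : ℕ∞) fun t => (M t).det := by
  have : (fun t => (M t).det) =
      fun t => ∑ σ : Equiv.Perm (Fin n), ((Equiv.Perm.sign σ : ℤ) : ℝ) * ∏ i, M t (σ i) i := by
    funext t; rw [Matrix.det_apply]
    simp [Units.smul_def, zsmul_eq_mul]
  rw [this]
  exact ContDiff.sum fun σ _ =>
    (contDiff_const.mul (contDiff_prod fun i _ => hM (σ i) i))

lemma MatSmooth.inv {T : ℝ → Matrix (Fin n) (Fin n) ℝ} (hT : MatSmooth T)
    (hTinv : ∀ t, IsUnit (T t)) : MatSmooth (fun t => (T t)⁻¹) := by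
  intro i j
  have hdet : ∀ t, (T t).det ≠ 0 := fun t =>
    ((Matrix.isUnit_iff_isUnit_det (T t)).mp (hTinv t)).ne_zero
  have : (fun t => (T t)⁻¹ i j) =
      fun t => ((T t).det)⁻¹ * ((T t).updateRow j (Pi.single i 1)).det := by
    funext t
    rw [Matrix.inv_def, Matrix.smul_apply, Ring.inverse_eq_inv, smul_eq_mul,
      Matrix.adjugate_apply]
  rw [this]
  refine ContDiff.mul (hT.det.inv hdet) ?_
  refine MatSmooth.det ?_
  intro a b
  by_cases h : a = j
  · subst h; simp only [Matrix.updateRow_self]; exact contDiff_const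
  · simp only [Matrix.updateRow_ne h]; exact hT a b

lemma MatSmooth.differentiable {A : ℝ → Matrix (Fin p) (Fin n) ℝ} (hA : MatSmooth A)
    (i : Fin p) (j : Fin n) : Differentiable ℝ fun t => A t i j :=
  (hA i j).differentiable (by norm_num)

lemma matDeriv_mul {A : ℝ → Matrix (Fin p) (Fin n) ℝ} {B : ℝ → Matrix (Fin n) (Fin q) ℝ}
    (hA : MatSmooth A) (hB : MatSmooth B) (t : ℝ) :
    matDeriv (fun s => A s * B s) t = matDeriv A t * B t + A t * matDeriv B t := by
  ext i j
  simp only [matDeriv, Matrix.of_apply, Matrix.add_apply, Matrix.mul_apply]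
  rw [deriv_fun_sum (A := fun k s => A s i k * B s k j) fun k _ => ((hA.differentiable i k t).mul (hB.differentiable k j t))]
  rw [← Finset.sum_add_distrib]
  refine Finset.sum_congr rfl fun k _ => ?_
  rw [deriv_fun_mul (hA.differentiable i k t) (hB.differentiable k j t)]

lemma matDeriv_inv {T : ℝ → Matrix (Fin n) (Fin n) ℝ} (hT : MatSmooth T)
    (hTinv : ∀ t, IsUnit (T t)) (t : ℝ) :
    matDeriv (fun s => (T s)⁻¹) t = -((T t)⁻¹ * matDeriv T t * (T t)⁻¹) := by
  have hinv : MatSmooth (fun s => (T s)⁻¹) := hT.inv hTinv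
  have h1 : matDeriv (fun s => T s * (T s)⁻¹) t = 0 := by
    have : (fun s => T s * (T s)⁻¹) = fun _ => (1 : Matrix (Fin n) (Fin n) ℝ) := by
      funext s
      exact Matrix.mul_nonsing_inv _ ((Matrix.isUnit_iff_isUnit_det _).mp (hTinv s))
    rw [this]
    ext i j
    simp [matDeriv]
  rw [matDeriv_mul hT hinv t] at h1
  have h2 : T t * matDeriv (fun s => (T s)⁻¹) t = -(matDeriv T t * (T t)⁻¹) := by
    linear_combination (norm := module) h1
  have h3 := congrArg (fun M => (T t)⁻¹ * M) h2
  rw [← Matrix.mul_assoc, Matrix.nonsing_inv_mul _ ((Matrix.isUnit_iff_isUnit_det _).mp (hTinv t)),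
    Matrix.one_mul] at h3
  rw [h3, Matrix.mul_neg, Matrix.mul_assoc]

end Aux

/-- **Corollary 2 of the paper, first part**: the local observability matrices of two
equivariant filters related by the (smooth, everywhere invertible) error-state
transformation `ε* = T ε` satisfy `O*_k = O_k T⁻¹` blockwise, where
`F* = Ṫ T⁻¹ + T F T⁻¹` and `H* = H T⁻¹`. -/
theorem observability_matrix_transformation (n p : ℕ)
    (T : ℝ → Matrix (Fin n) (Fin n) ℝ)
    (F : ℝ → Matrix (Fin n) (Fin n) ℝ)
    (H : ℝ → Matrix (Fin p) (Fin n) ℝ)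
    (hT : ∀ i j, ContDiff ℝ (⊤ : ℕ∞) fun t => T t i j)
    (hF : ∀ i j, ContDiff ℝ (⊤ : ℕ∞) fun t => F t i j)
    (hH : ∀ i j, ContDiff ℝ (⊤ : ℕ∞) fun t => H t i j)
    (hTinv : ∀ t, IsUnit (T t)) :
    let Fstar := fun t => matDeriv T t * (T t)⁻¹ + T t * F t * (T t)⁻¹
    let Hstar := fun t => H t * (T t)⁻¹
    ∀ (k : ℕ) (t : ℝ), obsSeq Fstar Hstar k t = obsSeq F H k t * (T t)⁻¹ := by
  intro Fstar Hstar
  have hT' : MatSmooth T := fun i j => (hT i j).of_le (by simp)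
  have hF' : MatSmooth F := fun i j => (hF i j).of_le (by simp)
  have hH' : MatSmooth H := fun i j => (hH i j).of_le (by simp)
  have hTi : MatSmooth fun s => (T s)⁻¹ := hT'.inv hTinv
  have hObs : ∀ k, MatSmooth (obsSeq F H k) := by
    intro k
    induction k with
    | zero => exact hH'
    | succ k ih =>
      show MatSmooth fun t => obsSeq F H k t * F t + matDeriv (obsSeq F H k) t
      exact (ih.mul hF').add ih.matDeriv
  intro k
  induction k with
  | zero => intro t; rfl
  | succ k ih =>
    intro t
    have heq : obsSeq Fstar Hstar k = fun s => obsSeq F H k s * (T s)⁻¹ := funext ih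
    have step : obsSeq Fstar Hstar (k + 1) t
        = obsSeq Fstar Hstar k t * Fstar t + matDeriv (obsSeq Fstar Hstar k) t := rfl
    have step' : obsSeq F H (k + 1) t
        = obsSeq F H k t * F t + matDeriv (obsSeq F H k) t := rfl
    rw [step, step', heq]
    rw [matDeriv_mul (hObs k) hTi t, matDeriv_inv hT' hTinv t]
    have hcan : (T t)⁻¹ * (T t * (F t * (T t)⁻¹)) = F t * (T t)⁻¹ := by
      rw [← Matrix.mul_assoc,
        Matrix.nonsing_inv_mul _ ((Matrix.isUnit_iff_isUnit_det _).mp (hTinv t)),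
        Matrix.one_mul]
    show obsSeq F H k t * (T t)⁻¹ * (matDeriv T t * (T t)⁻¹ + T t * F t * (T t)⁻¹)
        + (matDeriv (obsSeq F H k) t * (T t)⁻¹
          + obsSeq F H k t * -((T t)⁻¹ * matDeriv T t * (T t)⁻¹))
        = (obsSeq F H k t * F t + matDeriv (obsSeq F H k) t) * (T t)⁻¹
    simp only [Matrix.mul_add, Matrix.add_mul, Matrix.mul_neg, Matrix.mul_assoc, hcan]
    abel
end

section
/- Let n, p ∈ ℕ. Let T : Matrix (Fin n) (Fin n) ℝ be invertible, let P* : Matrix (Fin n) (Fin n) ℝ, H* : Matrix (Fin p) (Fin n) ℝ, and R : Matrix (Fin p) (Fin p) ℝ be arbitrary, and define P := T⁻¹·P*·(T⁻¹)ᵀ and H := H*·T. Then: (a) H·P·Hᵀ = H*·P*·(H*)ᵀ (the innovation covariances coincide); and (b) if S := H·P·Hᵀ + R is invertible, then the Kalman gains K := P·Hᵀ·S⁻¹ and K* := P*·(H*)ᵀ·S⁻¹ satisfy K = T⁻¹·K*. -/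
open Matrix

/-- **Correction-step gain invariance** (derivation of Algorithm 2, Transforming Correction):
with the equivalent covariance `P = T⁻¹ P* T⁻ᵀ` and measurement Jacobian `H = H* T`,
(a) the innovation covariances coincide, `H P Hᵀ = H* P* H*ᵀ`;
(b) if `S = H P Hᵀ + R` is invertible, the Kalman gains `K = P Hᵀ S⁻¹` and
`K* = P* H*ᵀ S⁻¹` satisfy `K = T⁻¹ K*`. -/
theorem correction_step_gain_invariance (n p : ℕ)
    (T : Matrix (Fin n) (Fin n) ℝ) (hT : IsUnit T)
    (Pstar : Matrix (Fin n) (Fin n) ℝ)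
    (Hstar : Matrix (Fin p) (Fin n) ℝ)
    (R : Matrix (Fin p) (Fin p) ℝ) :
    let P := T⁻¹ * Pstar * (T⁻¹)ᵀ
    let H := Hstar * T
    (H * P * Hᵀ = Hstar * Pstar * Hstarᵀ) ∧
    (∀ _ : IsUnit (H * P * Hᵀ + R),
      let S := H * P * Hᵀ + R
      let K := P * Hᵀ * S⁻¹
      let Kstar := Pstar * Hstarᵀ * S⁻¹
      K = T⁻¹ * Kstar) := by
  intro P H
  have hTi : T * T⁻¹ = 1 := mul_nonsing_inv T ((isUnit_iff_isUnit_det T).mp hT)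
  have hTiT : T⁻¹ * T = 1 := nonsing_inv_mul T ((isUnit_iff_isUnit_det T).mp hT)
  have ha : H * P * Hᵀ = Hstar * Pstar * Hstarᵀ := by
    simp only [P, H, transpose_mul]
    calc Hstar * T * (T⁻¹ * Pstar * (T⁻¹)ᵀ) * (Tᵀ * Hstarᵀ)
        = Hstar * (T * T⁻¹) * Pstar * ((T⁻¹)ᵀ * Tᵀ) * Hstarᵀ := by
          simp only [Matrix.mul_assoc]
      _ = Hstar * Pstar * Hstarᵀ := by
          rw [hTi, ← transpose_mul, hTi]; simp
  refine ⟨ha, fun hS => ?_⟩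
  intro S K Kstar
  simp only [K, Kstar, P, H, transpose_mul]
  calc T⁻¹ * Pstar * (T⁻¹)ᵀ * (Tᵀ * Hstarᵀ) * S⁻¹
      = T⁻¹ * (Pstar * ((T⁻¹)ᵀ * Tᵀ) * Hstarᵀ * S⁻¹) := by simp only [Matrix.mul_assoc]
    _ = T⁻¹ * (Pstar * Hstarᵀ * S⁻¹) := by rw [← transpose_mul, hTi]; simp
end

section
/- Let n, p ∈ ℕ. Let T : Matrix (Fin n) (Fin n) ℝ be invertible, let P* : Matrix (Fin n) (Fin n) ℝ, H* : Matrix (Fin p) (Fin n) ℝ, and R : Matrix (Fin p) (Fin p) ℝ be arbitrary, and define P := T⁻¹·P*·(T⁻¹)ᵀ and H := H*·T. Suppose S := H·P·Hᵀ + R is invertible, and set K := P·Hᵀ·S⁻¹ and K* := P*·(H*)ᵀ·S⁻¹. Then the posterior covariances satisfy (1 − K·H)·P = T⁻¹·((1 − K*·H*)·P*)·(T⁻¹)ᵀ, where 1 denotes the n×n identity matrix. -/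
open Matrix

/-- **Posterior-covariance invariance** (derivation of Algorithm 2, Transforming Correction):
with the equivalent covariance `P = T⁻¹ P* T⁻ᵀ`, measurement Jacobian `H = H* T`,
invertible innovation covariance `S = H P Hᵀ + R`, and gains `K = P Hᵀ S⁻¹`,
`K* = P* H*ᵀ S⁻¹`, the posterior covariances satisfy
`(1 - K H) P = T⁻¹ ((1 - K* H*) P*) T⁻ᵀ`. -/
theorem posterior_covariance_invariance (n p : ℕ)
    (T : Matrix (Fin n) (Fin n) ℝ) (hT : IsUnit T)
    (Pstar : Matrix (Fin n) (Fin n) ℝ)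
    (Hstar : Matrix (Fin p) (Fin n) ℝ)
    (R : Matrix (Fin p) (Fin p) ℝ) :
    let P := T⁻¹ * Pstar * (T⁻¹)ᵀ
    let H := Hstar * T
    let S := H * P * Hᵀ + R
    IsUnit S →
    let K := P * Hᵀ * S⁻¹
    let Kstar := Pstar * Hstarᵀ * S⁻¹
    (1 - K * H) * P = T⁻¹ * ((1 - Kstar * Hstar) * Pstar) * (T⁻¹)ᵀ := by
  intro P H S hS K Kstar
  have hTT : T * T⁻¹ = 1 := mul_nonsing_inv T ((isUnit_iff_isUnit_det T).mp hT)
  have hTt : (T⁻¹)ᵀ * Tᵀ = 1 := by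
    rw [← transpose_mul, hTT, transpose_one]
  show (1 - P * Hᵀ * S⁻¹ * H) * P = T⁻¹ * ((1 - Pstar * Hstarᵀ * S⁻¹ * Hstar) * Pstar) * (T⁻¹)ᵀ
  have hPH : P * Hᵀ = T⁻¹ * (Pstar * Hstarᵀ) := by
    show T⁻¹ * Pstar * (T⁻¹)ᵀ * (Hstar * T)ᵀ = _
    rw [transpose_mul]
    calc T⁻¹ * Pstar * (T⁻¹)ᵀ * (Tᵀ * Hstarᵀ)
        = T⁻¹ * Pstar * ((T⁻¹)ᵀ * Tᵀ) * Hstarᵀ := by simp [Matrix.mul_assoc]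
      _ = T⁻¹ * (Pstar * Hstarᵀ) := by rw [hTt]; simp [Matrix.mul_assoc]
  have hHP : H * P = Hstar * Pstar * (T⁻¹)ᵀ := by
    show Hstar * T * (T⁻¹ * Pstar * (T⁻¹)ᵀ) = _
    calc Hstar * T * (T⁻¹ * Pstar * (T⁻¹)ᵀ)
        = Hstar * (T * T⁻¹) * (Pstar * (T⁻¹)ᵀ) := by simp [Matrix.mul_assoc]
      _ = Hstar * Pstar * (T⁻¹)ᵀ := by rw [hTT]; simp [Matrix.mul_assoc]
  have : P * Hᵀ * S⁻¹ * H * P = T⁻¹ * (Pstar * Hstarᵀ * S⁻¹ * Hstar * Pstar) * (T⁻¹)ᵀ := by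
    calc P * Hᵀ * S⁻¹ * H * P = (P * Hᵀ) * S⁻¹ * (H * P) := by simp [Matrix.mul_assoc]
      _ = T⁻¹ * (Pstar * Hstarᵀ) * S⁻¹ * (Hstar * Pstar * (T⁻¹)ᵀ) := by rw [hPH, hHP]
      _ = T⁻¹ * (Pstar * Hstarᵀ * S⁻¹ * Hstar * Pstar) * (T⁻¹)ᵀ := by simp [Matrix.mul_assoc]
  rw [sub_mul, sub_mul, one_mul, one_mul, mul_sub, sub_mul, this]
end

section
/- Let n ∈ ℕ and q ∈ ℕ. Let T : Fin (q+1) → Matrix (Fin n) (Fin n) ℝ with T i invertible for every i, and let Φstep, Qstep : Fin q → Matrix (Fin n) (Fin n) ℝ. Define the starred steps Φstep* i := T (i+1) · Φstep i · (T i)⁻¹ and Qstep* i := T (i+1) · Qstep i · (T (i+1))ᵀ (indices cast into Fin (q+1)). Define accumulated sequences by Φacc 0 = 1, Φacc (i+1) = Φstep i · Φacc i; Qacc 0 = 0, Qacc (i+1) = Φstep i · Qacc i · (Φstep i)ᵀ + Qstep i; and analogously Φacc* and Qacc* from the starred steps. Then for every i ≤ q: Φacc* i = T i · Φacc i · (T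 0)⁻¹ and Qacc* i = T i · Qacc i · (T i)ᵀ. -/
open Matrix

/-! Each starred recursion is the unstarred one conjugated by `T`: in the product of consecutive
starred factors the inner `(T i)⁻¹ · T i` (and, for the noise, `(T i)ᵀ · (T i)⁻¹ᵀ`) cancel,
so induction on `i` carries the conjugation through both recursions. -/

namespace Matrix

variable {m R : Type*} [Fintype m] [DecidableEq m] [CommRing R]

theorem conj_mul_conj {A B C X Y : Matrix m m R} (hB : IsUnit B) :
    (A * X * B⁻¹) * (B * Y * C) = A * (X * Y) * C := by
  have hB' := (isUnit_iff_isUnit_det B).mp hB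
  simp only [Matrix.mul_assoc, nonsing_inv_mul_cancel_left _ _ hB']

theorem conj_mul_congr_mul_conj_transpose {A B X Y : Matrix m m R} (hB : IsUnit B) :
    (A * X * B⁻¹) * (B * Y * Bᵀ) * (A * X * B⁻¹)ᵀ = A * (X * Y * Xᵀ) * Aᵀ := by
  have hBt : IsUnit Bᵀ.det := by rw [det_transpose]; exact (isUnit_iff_isUnit_det B).mp hB
  rw [conj_mul_conj hB]
  simp only [transpose_mul, transpose_nonsing_inv, Matrix.mul_assoc,
    mul_nonsing_inv_cancel_left _ _ hBt]

end Matrix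

/-- **Discrete accumulation of transition and noise matrices (Corollary 3 / correctness of
Algorithm 1, Transforming Propagation)**: over `q` IMU sub-intervals, the accumulated
sequences are defined by the recursions `Φacc 0 = 1`, `Φacc (i+1) = Φstep i · Φacc i`,
`Qacc 0 = 0`, `Qacc (i+1) = Φstep i · Qacc i · (Φstep i)ᵀ + Qstep i`, and analogously
`Φacc*`, `Qacc*` from the starred single-step matrices
`Φstep* i = T (i+1) · Φstep i · (T i)⁻¹` and `Qstep* i = T (i+1) · Qstep i · (T (i+1))ᵀ`.
Then for every `i ≤ q`:  `Φacc* i = T i · Φacc i · (T 0)⁻¹` and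
`Qacc* i = T i · Qacc i · (T i)ᵀ`. -/
theorem accumulated_matrices_transformation (n q : ℕ)
    (T : Fin (q + 1) → Matrix (Fin n) (Fin n) ℝ)
    (hT : ∀ i, IsUnit (T i))
    (Φstep Qstep : Fin q → Matrix (Fin n) (Fin n) ℝ)
    (Φacc Qacc ΦaccStar QaccStar : Fin (q + 1) → Matrix (Fin n) (Fin n) ℝ)
    (hΦ₀ : Φacc 0 = 1)
    (hΦ : ∀ i : Fin q, Φacc i.succ = Φstep i * Φacc i.castSucc)
    (hQ₀ : Qacc 0 = 0)
    (hQ : ∀ i : Fin q, Qacc i.succ = Φstep i * Qacc i.castSucc * (Φstep i)ᵀ + Qstep i)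
    (hΦstar₀ : ΦaccStar 0 = 1)
    (hΦstar : ∀ i : Fin q, ΦaccStar i.succ
      = (T i.succ * Φstep i * (T i.castSucc)⁻¹) * ΦaccStar i.castSucc)
    (hQstar₀ : QaccStar 0 = 0)
    (hQstar : ∀ i : Fin q, QaccStar i.succ
      = (T i.succ * Φstep i * (T i.castSucc)⁻¹) * QaccStar i.castSucc
          * (T i.succ * Φstep i * (T i.castSucc)⁻¹)ᵀ
        + T i.succ * Qstep i * (T i.succ)ᵀ) :
    ∀ i : Fin (q + 1),
      ΦaccStar i = T i * Φacc i * (T 0)⁻¹ ∧ QaccStar i = T i * Qacc i * (T i)ᵀ := by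
  intro i
  induction i using Fin.induction with
  | zero =>
    refine ⟨?_, by rw [hQstar₀, hQ₀, Matrix.mul_zero, Matrix.zero_mul]⟩
    rw [hΦstar₀, hΦ₀, Matrix.mul_one, mul_nonsing_inv _ ((isUnit_iff_isUnit_det _).mp (hT 0))]
  | succ i ih =>
    obtain ⟨ihΦ, ihQ⟩ := ih
    constructor
    · rw [hΦstar i, ihΦ, hΦ i, conj_mul_conj (hT _)]
    · rw [hQstar i, ihQ, hQ i, conj_mul_congr_mul_conj_transpose (hT _), Matrix.mul_add,
        Matrix.add_mul]
end

section
/- Let m ∈ ℕ, let R : Matrix (Fin 3) (Fin 3) ℝ satisfy R·Rᵀ = 1, and let v, p, g ∈ ℝ³ and f : Fin m → ℝ³. Write S(a) for the 3×3 skew-symmetric matrix of a ∈ ℝ³ (so S(a)·x = a ×₃ x for all x ∈ ℝ³). Define the (15+3m)×(15+3m) block matrix T, with row and column blocks of sizes (3,3,3,3,3, 3,…,3), by: block row 1 = (R, 0, 0, 0, 0, 0,…,0); block row 2 = (S(v)·R, I₃, 0, 0, 0, 0,…,0); block row 3 = (S(p)·R, 0, I₃, 0, 0, 0,…,0); block row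 4 = (0, 0, 0, R, 0, 0,…,0); block row 5 = (0, 0, 0, S(v)·R, R, 0,…,0); and feature block row i (for i = 1,…,m) zero in the first five block columns and I₃ in its own feature block column, zero elsewhere. Define the (15+3m)×4 matrix N by block rows (of height 3) with columns split (3,1): row 1 = (0₃ₓ₃, −Rᵀ·g); row 2 = (0₃ₓ₃, S(v)·g); row 3 = (I₃, S(p)·g); rows 4–5 = (0₃ₓ₃, 0); feature row i = (I₃, S(f i)·g). Then T·N equals the (15+3m)×4 matrix with block rows: row 1 = (0₃ₓ₃, −g); row 2 = (0₃ₓ₃, 0); row 3 = (I₃, 0); rows 4–5 = (0₃ₓ₃, 0); feature row i = (I₃, S(f i)·g). -/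
open Matrix

/-- The 3×3 skew-symmetric matrix `S(a)` of `a ∈ ℝ³`, satisfying `S(a) · x = a ×₃ x`. -/
def skew (a : Fin 3 → ℝ) : Matrix (Fin 3) (Fin 3) ℝ :=
  !![0, -a 2, a 1; a 2, 0, -a 0; -a 1, a 0, 0]

/-- Assemble a `(15+3m) × (15+3m)` matrix from 3×3 blocks indexed by the five IMU block
indices together with the `m` feature block indices. -/
def assembleBlocks {m : ℕ}
    (B : (Fin 5 ⊕ Fin m) → (Fin 5 ⊕ Fin m) → Matrix (Fin 3) (Fin 3) ℝ) :
    Matrix ((Fin 5 ⊕ Fin m) × Fin 3) ((Fin 5 ⊕ Fin m) × Fin 3) ℝ :=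
  fun x y => B x.1 y.1 x.2 y.2

/-- Assemble a `(15+3m) × 4` matrix from block rows of height 3 whose columns are
split `(3, 1)`. -/
def assembleRows {m : ℕ}
    (Brow : (Fin 5 ⊕ Fin m) → Matrix (Fin 3) (Fin 3 ⊕ Fin 1) ℝ) :
    Matrix ((Fin 5 ⊕ Fin m) × Fin 3) (Fin 3 ⊕ Fin 1) ℝ :=
  fun x c => Brow x.1 x.2 c

/-- A block row `(A, b)` with columns split `(3, 1)`. -/
def rowPair (A : Matrix (Fin 3) (Fin 3) ℝ) (b : Fin 3 → ℝ) :
    Matrix (Fin 3) (Fin 3 ⊕ Fin 1) ℝ :=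
  fun r => Sum.elim (fun j => A r j) (fun _ => b r)

/-- The block entries of the transformation matrix `T` from the ESKF error-state to the
SD-EqF error-state (equation (24) of the paper). -/
def eskfToSdBlocks (m : ℕ) (R : Matrix (Fin 3) (Fin 3) ℝ) (v p : Fin 3 → ℝ) :
    (Fin 5 ⊕ Fin m) → (Fin 5 ⊕ Fin m) → Matrix (Fin 3) (Fin 3) ℝ
  | Sum.inl a, Sum.inl b =>
      (!![R, 0, 0, 0, 0;
          skew v * R, 1, 0, 0, 0;
          skew p * R, 0, 1, 0, 0;
          0, 0, 0, R, 0;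
          0, 0, 0, skew v * R, R] :
        Matrix (Fin 5) (Fin 5) (Matrix (Fin 3) (Fin 3) ℝ)) a b
  | Sum.inl _, Sum.inr _ => 0
  | Sum.inr _, Sum.inl _ => 0
  | Sum.inr i, Sum.inr j => if i = j then 1 else 0

/-- The basis matrix `N` of the ESKF unobservable subspace for visual-inertial navigation
with gravity vector `g`. -/
def eskfUnobsBasis (m : ℕ) (R : Matrix (Fin 3) (Fin 3) ℝ) (v p g : Fin 3 → ℝ)
    (f : Fin m → Fin 3 → ℝ) :
    Matrix ((Fin 5 ⊕ Fin m) × Fin 3) (Fin 3 ⊕ Fin 1) ℝ :=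
  assembleRows (Sum.elim
    ![rowPair 0 (-(Rᵀ *ᵥ g)),
      rowPair 0 (skew v *ᵥ g),
      rowPair 1 (skew p *ᵥ g),
      rowPair 0 0,
      rowPair 0 0]
    (fun i => rowPair 1 (skew (f i) *ᵥ g)))

/-- The basis matrix of the SD-EqF unobservable subspace (equation (26) of the paper). -/
def sdUnobsBasis (m : ℕ) (g : Fin 3 → ℝ) (f : Fin m → Fin 3 → ℝ) :
    Matrix ((Fin 5 ⊕ Fin m) × Fin 3) (Fin 3 ⊕ Fin 1) ℝ :=
  assembleRows (Sum.elim
    ![rowPair 0 (-g),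
      rowPair 0 0,
      rowPair 1 0,
      rowPair 0 0,
      rowPair 0 0]
    (fun i => rowPair 1 (skew (f i) *ᵥ g)))

lemma mul_rowPair (A B : Matrix (Fin 3) (Fin 3) ℝ) (x : Fin 3 → ℝ) :
    A * rowPair B x = rowPair (A * B) (A *ᵥ x) := by
  ext r c
  rcases c with j | u <;>
    simp [rowPair, Matrix.mul_apply, Matrix.mulVec, dotProduct]

lemma rowPair_add (A B : Matrix (Fin 3) (Fin 3) ℝ) (x y : Fin 3 → ℝ) :
    rowPair A x + rowPair B y = rowPair (A + B) (x + y) := by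
  ext r c
  rcases c with j | u <;> simp [rowPair]

/-- **Transformation of the ESKF unobservable subspace to the SD-EqF one**: with `R`
orthogonal (`R Rᵀ = 1`), multiplying the basis matrix `N` of the ESKF unobservable
subspace by the ESKF → SD-EqF transformation matrix `T` yields the basis matrix of the
SD-EqF unobservable subspace (equation (26) of the paper). -/
theorem eskf_to_sd_unobservable_basis (m : ℕ)
    (R : Matrix (Fin 3) (Fin 3) ℝ) (hR : R * Rᵀ = 1)
    (v p g : Fin 3 → ℝ) (f : Fin m → Fin 3 → ℝ) :
    assembleBlocks (eskfToSdBlocks m R v p) * eskfUnobsBasis m R v p g f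
      = sdUnobsBasis m g f := by
  have hg : R *ᵥ (Rᵀ *ᵥ g) = g := by rw [Matrix.mulVec_mulVec, hR, Matrix.one_mulVec]
  set Nrow : (Fin 5 ⊕ Fin m) → Matrix (Fin 3) (Fin 3 ⊕ Fin 1) ℝ :=
    Sum.elim
      ![rowPair 0 (-(Rᵀ *ᵥ g)),
        rowPair 0 (skew v *ᵥ g),
        rowPair 1 (skew p *ᵥ g),
        rowPair 0 0,
        rowPair 0 0]
      (fun i => rowPair 1 (skew (f i) *ᵥ g)) with hNrow
  set Nrow' : (Fin 5 ⊕ Fin m) → Matrix (Fin 3) (Fin 3 ⊕ Fin 1) ℝ :=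
    Sum.elim
      ![rowPair 0 (-g),
        rowPair 0 0,
        rowPair 1 0,
        rowPair 0 0,
        rowPair 0 0]
      (fun i => rowPair 1 (skew (f i) *ᵥ g)) with hNrow'
  have key : ∀ a, (∑ b, eskfToSdBlocks m R v p a b * Nrow b) = Nrow' a := by
    rintro (a | i)
    · have h1 : skew v * R * Rᵀ = skew v := by rw [mul_assoc, hR, mul_one]
      have h2 : skew p * R * Rᵀ = skew p := by rw [mul_assoc, hR, mul_one]
      have hz : rowPair (0 : Matrix (Fin 3) (Fin 3) ℝ) (0 : Fin 3 → ℝ) = 0 := by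
        ext r c; rcases c with j | u <;> simp [rowPair]
      fin_cases a <;>
        simp [hNrow, hNrow', Fintype.sum_sum_type, Fin.sum_univ_five,
          eskfToSdBlocks, mul_rowPair, Matrix.mulVec_mulVec, Matrix.mulVec_neg,
          h1, h2, hR, Matrix.one_mulVec, rowPair_add, hz]
    · simp only [hNrow, hNrow', Fintype.sum_sum_type, eskfToSdBlocks,
        Matrix.zero_mul, Finset.sum_const_zero, zero_add, Sum.elim_inr]
      rw [Finset.sum_eq_single i
          (fun b _ hb => by rw [if_neg (Ne.symm hb), Matrix.zero_mul])
          (fun h => absurd (Finset.mem_univ i) h),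
        if_pos rfl, Matrix.one_mul]
  ext ⟨a, r⟩ c
  have h1 : (assembleBlocks (eskfToSdBlocks m R v p) * eskfUnobsBasis m R v p g f)
      ((a, r)) c = (∑ b, eskfToSdBlocks m R v p a b * Nrow b) r c := by
    rw [Matrix.mul_apply, Fintype.sum_prod_type, Matrix.sum_apply]
    refine Finset.sum_congr rfl fun b _ => ?_
    rw [Matrix.mul_apply]
    rfl
  rw [h1, key]
  rcases a with a | i
  · fin_cases a <;> rfl
  · rfl
end
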